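/- arXiv:1809.07011 — 4 statements merged into one kernel-verified Lean document; each statement's English description precedes it below -/
import Mathlib

section
/- Let π' , α ∈ (0,1), let a, b ≥ 0 with a + b > 0, set π_unif = (π' − α·π')/(π' + α − 2·α·π'), p_t = π'·a + (1−π')·b, and q = π_unif·a + (1−π_unif)·b. Then sign(π'·a/p_t − α) = sign(π_unif·a/q − 1/2). -/
/-!
Both sides have the sign of `N = π'(1-α)a - α(1-π')b`. Clearing the positive denominator `p_t`
turns the left side into `sign (π'a - α p_t) = sign N`. With `D = π' + α - 2απ' > 0` one has
`D π_unif = π'(1-α)` and `D (1 - π_unif) = α(1-π')`, so after clearing `q` the right side is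
`sign (π_unif a - q/2)`, and multiplying by `2D` turns `2π_unif a - q = π_unif a - (1-π_unif) b`
into `N` as well.
-/

namespace Real

theorem sign_mul_of_pos {c : ℝ} (hc : 0 < c) (x : ℝ) : sign (c * x) = sign x := by
  rcases lt_trichotomy x 0 with hx | rfl | hx
  · rw [sign_of_neg (mul_neg_of_pos_of_neg hc hx), sign_of_neg hx]
  · rw [mul_zero]
  · rw [sign_of_pos (mul_pos hc hx), sign_of_pos hx]

theorem sign_div_sub_of_pos {p : ℝ} (hp : 0 < p) (x c : ℝ) :
    sign (x / p - c) = sign (x - c * p) := by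
  rw [← sign_mul_of_pos hp, mul_sub, mul_div_cancel₀ x hp.ne', mul_comm p c]

end Real

theorem mul_add_one_sub_mul_pos {c a b : ℝ} (hc : c ∈ Set.Ioo (0 : ℝ) 1) (ha : 0 ≤ a)
    (hb : 0 ≤ b) (hab : 0 < a + b) : 0 < c * a + (1 - c) * b := by
  obtain ⟨hc0, hc1⟩ := hc
  have : min c (1 - c) * (a + b) ≤ c * a + (1 - c) * b := by
    nlinarith [min_le_left c (1 - c), min_le_right c (1 - c)]
  exact (mul_pos (lt_min hc0 (sub_pos.mpr hc1)) hab).trans_le this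

section UnifiedPrior

variable {π' α : ℝ}

theorem unified_prior_denom_pos (hπ' : π' ∈ Set.Ioo (0 : ℝ) 1) (hα : α ∈ Set.Ioo (0 : ℝ) 1) :
    0 < π' + α - 2 * α * π' := by
  obtain ⟨hπ0, hπ1⟩ := hπ'
  obtain ⟨hα0, hα1⟩ := hα
  nlinarith [mul_pos hπ0 (sub_pos.mpr hα1), mul_pos hα0 (sub_pos.mpr hπ1)]

theorem denom_mul_unified_prior (hD : π' + α - 2 * α * π' ≠ 0) :
    (π' + α - 2 * α * π') * ((π' - α * π') / (π' + α - 2 * α * π')) = π' * (1 - α) := by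
  rw [mul_div_cancel₀ _ hD]
  ring

theorem denom_mul_one_sub_unified_prior (hD : π' + α - 2 * α * π' ≠ 0) :
    (π' + α - 2 * α * π') * (1 - (π' - α * π') / (π' + α - 2 * α * π')) = α * (1 - π') := by
  rw [mul_sub, denom_mul_unified_prior hD]
  ring

theorem unified_prior_mem_Ioo (hπ' : π' ∈ Set.Ioo (0 : ℝ) 1) (hα : α ∈ Set.Ioo (0 : ℝ) 1) :
    (π' - α * π') / (π' + α - 2 * α * π') ∈ Set.Ioo (0 : ℝ) 1 := by
  have hD := unified_prior_denom_pos hπ' hα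
  have h₀ : 0 < π' * (1 - α) := mul_pos hπ'.1 (sub_pos.mpr hα.2)
  have h₁ : 0 < α * (1 - π') := mul_pos hα.1 (sub_pos.mpr hπ'.2)
  rw [← denom_mul_unified_prior hD.ne'] at h₀
  rw [← denom_mul_one_sub_unified_prior hD.ne'] at h₁
  exact ⟨pos_of_mul_pos_right h₀ hD.le, sub_pos.mp (pos_of_mul_pos_right h₁ hD.le)⟩

end UnifiedPrior

theorem stmt_2 (π' α a b πunif pt q : ℝ)
    (hπ' : π' ∈ Set.Ioo (0:ℝ) 1) (hα : α ∈ Set.Ioo (0:ℝ) 1)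
    (ha : 0 ≤ a) (hb : 0 ≤ b) (hab : 0 < a + b)
    (hunif : πunif = (π' - α * π') / (π' + α - 2 * α * π'))
    (hpt : pt = π' * a + (1 - π') * b) (hq : q = πunif * a + (1 - πunif) * b) :
    Real.sign (π' * a / pt - α) = Real.sign (πunif * a / q - 1 / 2) := by
  have hD := unified_prior_denom_pos hπ' hα
  have hu := denom_mul_unified_prior hD.ne'
  have hu' := denom_mul_one_sub_unified_prior hD.ne'
  rw [← hunif] at hu hu'
  have hpt0 : 0 < pt := hpt ▸ mul_add_one_sub_mul_pos hπ' ha hb hab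
  have hq0 : 0 < q :=
    hq ▸ mul_add_one_sub_mul_pos (hunif ▸ unified_prior_mem_Ioo hπ' hα) ha hb hab
  rw [Real.sign_div_sub_of_pos hpt0, Real.sign_div_sub_of_pos hq0,
    ← Real.sign_mul_of_pos (mul_pos two_pos hD) (πunif * a - 1 / 2 * q)]
  congr 1
  rw [hpt, hq]
  linear_combination (-a) * hu + b * hu'
end

section
/- Let π, π', α ∈ (0,1), let a, b ≥ 0 with a + b > 0, set π_unif = (π' − α·π')/(π' + α − 2·α·π'), α_unif = (π − π·π_unif)/(π_unif + π − 2·π·π_unif), p_u = π·a + (1−π)·b, and p_t = π'·a + (1−π')·b. Then sign(π'·a/p_t − α) = sign(π·a/p_u − α_unif). -/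
/-!
Writing `odds t = t / (1 - t)`, the Bayes decision `p a / (p a + (1 - p) b) > t` is
`odds p / odds t * a > b`: it depends on the prior `p` and the threshold `t` only through the
ratio `odds p / odds t`. Both pairs `(π', α)` and `(π, α_unif)` have ratio `odds π_unif`.
-/

open Set

theorem Real.sign_mul_of_pos_s3 {k : ℝ} (hk : 0 < k) (x : ℝ) : Real.sign (k * x) = Real.sign x := by
  rcases lt_trichotomy x 0 with h | rfl | h
  · rw [Real.sign_of_neg h, Real.sign_of_neg (mul_neg_of_pos_of_neg hk h)]
  · rw [mul_zero]
  · rw [Real.sign_of_pos h, Real.sign_of_pos (mul_pos hk h)]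

noncomputable def odds (t : ℝ) : ℝ := t / (1 - t)

theorem odds_div_add {x y : ℝ} (hxy : x + y ≠ 0) : odds (x / (x + y)) = x / y := by
  have : 1 - x / (x + y) = y / (x + y) := by field_simp; ring
  rw [odds, this, div_div_div_cancel_right₀ hxy]

theorem div_add_mem_Ioo {x y : ℝ} (hx : 0 < x) (hy : 0 < y) : x / (x + y) ∈ Ioo 0 1 :=
  ⟨by positivity, (div_lt_one (by positivity)).2 (lt_add_of_pos_right x hy)⟩

theorem mixture_pos {p a b : ℝ} (hp : p ∈ Ioo 0 1) (ha : 0 ≤ a) (hb : 0 ≤ b) (hab : 0 < a + b) :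
    0 < p * a + (1 - p) * b := by
  obtain ⟨hp0, hp1⟩ := hp
  have hpb : 0 ≤ (1 - p) * b := mul_nonneg (sub_nonneg.2 hp1.le) hb
  rcases ha.eq_or_lt with rfl | ha
  · have : 0 < (1 - p) * b := mul_pos (sub_pos.2 hp1) (by linarith)
    linarith
  · linarith [mul_pos hp0 ha]

theorem sign_div_mixture_sub {p t a b : ℝ} (hp : p < 1) (ht : t ∈ Ioo 0 1)
    (hP : 0 < p * a + (1 - p) * b) :
    Real.sign (p * a / (p * a + (1 - p) * b) - t) = Real.sign (odds p / odds t * a - b) := by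
  obtain ⟨ht0, ht1⟩ := ht
  have hp' : 0 < 1 - p := sub_pos.2 hp
  have ht' : 0 < 1 - t := sub_pos.2 ht1
  have hfactor : p * a / (p * a + (1 - p) * b) - t =
      t * (1 - p) / (p * a + (1 - p) * b) * (odds p / odds t * a - b) := by
    unfold odds
    field_simp
    ring
  rw [hfactor, Real.sign_mul_of_pos_s3 (by positivity)]

theorem stmt_3 (π π' α a b πunif αunif pu pt : ℝ)
    (hπ : π ∈ Set.Ioo (0:ℝ) 1) (hπ' : π' ∈ Set.Ioo (0:ℝ) 1) (hα : α ∈ Set.Ioo (0:ℝ) 1)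
    (ha : 0 ≤ a) (hb : 0 ≤ b) (hab : 0 < a + b)
    (hunif : πunif = (π' - α * π') / (π' + α - 2 * α * π'))
    (haunif : αunif = (π - π * πunif) / (πunif + π - 2 * π * πunif))
    (hpu : pu = π * a + (1 - π) * b) (hpt : pt = π' * a + (1 - π') * b) :
    Real.sign (π' * a / pt - α) = Real.sign (π * a / pu - αunif) := by
  have hπ'α : 0 < π' * (1 - α) := mul_pos hπ'.1 (sub_pos.2 hα.2)
  have hαπ' : 0 < α * (1 - π') := mul_pos hα.1 (sub_pos.2 hπ'.2)
  have hπunif : πunif = π' * (1 - α) / (π' * (1 - α) + α * (1 - π')) := by rw [hunif]; ring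
  have hπunif_mem : πunif ∈ Ioo 0 1 := hπunif ▸ div_add_mem_Ioo hπ'α hαπ'
  have hππunif : 0 < π * (1 - πunif) := mul_pos hπ.1 (sub_pos.2 hπunif_mem.2)
  have hπunifπ : 0 < πunif * (1 - π) := mul_pos hπunif_mem.1 (sub_pos.2 hπ.2)
  have hαunif : αunif = π * (1 - πunif) / (π * (1 - πunif) + πunif * (1 - π)) := by
    rw [haunif]; ring
  have hodds_πunif : odds πunif = odds π' / odds α := by
    rw [hπunif, odds_div_add (by positivity)]
    unfold odds
    field_simp
  have hodds_αunif : odds αunif = odds π / odds πunif := by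
    rw [hαunif, odds_div_add (by positivity)]
    unfold odds
    field_simp
  have hodds : odds π / odds αunif = odds π' / odds α := by
    rw [hodds_αunif, div_div_cancel₀ (show odds π ≠ 0 from (div_pos hπ.1 (sub_pos.2 hπ.2)).ne'), hodds_πunif]
  rw [hpt, hpu, sign_div_mixture_sub hπ'.2 hα (mixture_pos hπ' ha hb hab),
    sign_div_mixture_sub hπ.2 (hαunif ▸ div_add_mem_Ioo hππunif hπunifπ)
      (mixture_pos hπ ha hb hab), hodds]
end

section
/- Let μ_p and μ_n be probability measures on a measurable space X, let π ∈ (0,1), α ∈ (0,1), and let μ_u = π·μ_p + (1−π)·μ_n. Let g : X → ℝ and ℓ : ℝ → ℝ be such that x ↦ ℓ(g x) and x ↦ ℓ(−g x) are integrable with respect to both μ_p and μ_n. Then π·(1−α)·∫ ℓ(g x) dμ_p + (1−π)·α·∫ ℓ(−g x) dμ_n = π·∫ ((1−α)·ℓ(g x) − α·ℓ(−g x)) dμ_p + α·∫ ℓ(−g x) dμ_u. -/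
/-! Since `μu = π • μp + (1 - π) • μn`, the unknown negative-class term `(1 - π) 𝔼ₙ[ℓ(-g)]` equals
`𝔼ᵤ[ℓ(-g)] - π 𝔼ₚ[ℓ(-g)]`; substituting this and using linearity of the integral gives the identity. -/

open MeasureTheory

theorem integral_ofReal_smul_add_ofReal_smul_measure {X E : Type*} [MeasurableSpace X]
    [NormedAddCommGroup E] [NormedSpace ℝ E] {μ ν : Measure X} {f : X → E}
    (hμ : Integrable f μ) (hν : Integrable f ν) {a b : ℝ} (ha : 0 ≤ a) (hb : 0 ≤ b) :
    ∫ x, f x ∂(ENNReal.ofReal a • μ + ENNReal.ofReal b • ν)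
      = a • ∫ x, f x ∂μ + b • ∫ x, f x ∂ν := by
  rw [integral_add_measure (hμ.smul_measure ENNReal.ofReal_ne_top)
      (hν.smul_measure ENNReal.ofReal_ne_top),
    integral_smul_measure, integral_smul_measure, ENNReal.toReal_ofReal ha,
    ENNReal.toReal_ofReal hb]

theorem stmt_6_general {X : Type*} [MeasurableSpace X]
    (μp μn : Measure X)
    (π α : ℝ) (hπ : π ∈ Set.Ioo (0:ℝ) 1)
    (μu : Measure X) (hμu : μu = ENNReal.ofReal π • μp + ENNReal.ofReal (1 - π) • μn)
    (g : X → ℝ) (ℓ : ℝ → ℝ)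
    (h1p : Integrable (fun x => ℓ (g x)) μp)
    (h2p : Integrable (fun x => ℓ (-g x)) μp) (h2n : Integrable (fun x => ℓ (-g x)) μn) :
    π * (1 - α) * ∫ x, ℓ (g x) ∂μp + (1 - π) * α * ∫ x, ℓ (-g x) ∂μn
      = π * ∫ x, ((1 - α) * ℓ (g x) - α * ℓ (-g x)) ∂μp
        + α * ∫ x, ℓ (-g x) ∂μu := by
  have hu : ∫ x, ℓ (-g x) ∂μu
      = π * ∫ x, ℓ (-g x) ∂μp + (1 - π) * ∫ x, ℓ (-g x) ∂μn := by
    rw [hμu, integral_ofReal_smul_add_ofReal_smul_measure h2p h2n hπ.1.le (by linarith [hπ.2]),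
      smul_eq_mul, smul_eq_mul]
  rw [hu, integral_sub (h1p.const_mul _) (h2p.const_mul _), integral_const_mul,
    integral_const_mul]
  ring

theorem stmt_6 {X : Type*} [MeasurableSpace X]
    (μp μn : Measure X) [IsProbabilityMeasure μp] [IsProbabilityMeasure μn]
    (π α : ℝ) (hπ : π ∈ Set.Ioo (0:ℝ) 1) (hα : α ∈ Set.Ioo (0:ℝ) 1)
    (μu : Measure X) (hμu : μu = ENNReal.ofReal π • μp + ENNReal.ofReal (1 - π) • μn)
    (g : X → ℝ) (ℓ : ℝ → ℝ)
    (h1p : Integrable (fun x => ℓ (g x)) μp) (h1n : Integrable (fun x => ℓ (g x)) μn)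
    (h2p : Integrable (fun x => ℓ (-g x)) μp) (h2n : Integrable (fun x => ℓ (-g x)) μn) :
    π * (1 - α) * ∫ x, ℓ (g x) ∂μp + (1 - π) * α * ∫ x, ℓ (-g x) ∂μn
      = π * ∫ x, ((1 - α) * ℓ (g x) - α * ℓ (-g x)) ∂μp
        + α * ∫ x, ℓ (-g x) ∂μu :=
  stmt_6_general μp μn π α hπ μu hμu g ℓ h1p h2p h2n
end

section
/- Let E be a real inner product space, X a measurable space, φ : X → E, and for θ ∈ E define g_θ(x) = ⟪θ, φ x⟫. Let ℓ : ℝ → ℝ be convex with ℓ(z) − ℓ(−z) = −z for all z ∈ ℝ. Let μ_p be a probability measure and μ_u a finite measure on X such that for every θ ∈ E the maps x ↦ ℓ(g_θ x), x ↦ ℓ(−g_θ x), and x ↦ ⟪θ, φ x⟫ are integrable with respect to μ_p and μ_u. If π ∈ (0,1) and 0 < α ≤ 1/2, then the function θ ↦ π·∫ ((1−α)·ℓ(g_θ x) − α·ℓ(−g_θ x)) dμ_p + α·∫ ℓ(−g_θ x) dμ_u is convex on E. -/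
/-!
Since `ℓ(-z) = ℓ(z) + z`, the pointwise loss `(1 - α) ℓ(z) - α ℓ(-z)` equals `(1 - 2α) ℓ(z) - α z`,
a nonnegative multiple of a convex function plus a linear one, hence convex as soon as `α ≤ 1/2`.
Precomposing convex functions of `z` with the linear maps `θ ↦ ⟪θ, ±φ x⟫` and integrating
preserves convexity, and so does a nonnegative combination of the two risks.
-/

open MeasureTheory

theorem convexOn_integral {E X : Type*} [AddCommGroup E] [Module ℝ E] [MeasurableSpace X]
    {μ : Measure X} {s : Set E} {F : E → X → ℝ} (hs : Convex ℝ s)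
    (hF : ∀ x, ConvexOn ℝ s (F · x)) (hint : ∀ θ ∈ s, Integrable (F θ) μ) :
    ConvexOn ℝ s (fun θ => ∫ x, F θ x ∂μ) := by
  refine ⟨hs, fun θ₁ h₁ θ₂ h₂ a b ha hb hab => ?_⟩
  calc ∫ x, F (a • θ₁ + b • θ₂) x ∂μ
      ≤ ∫ x, (a • F θ₁ x + b • F θ₂ x) ∂μ :=
        integral_mono (hint _ (hs h₁ h₂ ha hb hab))
          (((hint θ₁ h₁).smul a).add ((hint θ₂ h₂).smul b))
          fun x => (hF x).2 h₁ h₂ ha hb hab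
    _ = a • ∫ x, F θ₁ x ∂μ + b • ∫ x, F θ₂ x ∂μ := by
        rw [← integral_smul, ← integral_smul]
        exact integral_add ((hint θ₁ h₁).smul a) ((hint θ₂ h₂).smul b)

theorem ConvexOn.comp_inner_left {E : Type*} [NormedAddCommGroup E] [InnerProductSpace ℝ E]
    {f : ℝ → ℝ} (hf : ConvexOn ℝ Set.univ f) (v : E) :
    ConvexOn ℝ Set.univ (fun θ : E => f (inner ℝ θ v)) :=
  hf.comp_linearMap ((innerₗ E).flip v)

theorem convexOn_asymmetric_loss {ℓ : ℝ → ℝ} (hℓconv : ConvexOn ℝ Set.univ ℓ)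
    (hℓodd : ∀ z : ℝ, ℓ z - ℓ (-z) = -z) {α : ℝ} (hα : α ≤ 1 / 2) :
    ConvexOn ℝ Set.univ (fun z => (1 - α) * ℓ z - α * ℓ (-z)) := by
  have hrewrite : (fun z => (1 - α) * ℓ z - α * ℓ (-z))
      = (1 - 2 * α) • ℓ + (-α) • (LinearMap.id : ℝ →ₗ[ℝ] ℝ) := by
    ext z
    simp only [Pi.add_apply, Pi.smul_apply, LinearMap.id_apply, smul_eq_mul]
    linear_combination α * hℓodd z
  rw [hrewrite]
  exact (hℓconv.smul (by linarith)).add (((-α) • LinearMap.id).convexOn convex_univ)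

theorem stmt_7_general {E : Type*} [NormedAddCommGroup E] [InnerProductSpace ℝ E]
    {X : Type*} [MeasurableSpace X] (φ : X → E)
    (ℓ : ℝ → ℝ) (hℓconv : ConvexOn ℝ Set.univ ℓ)
    (hℓodd : ∀ z : ℝ, ℓ z - ℓ (-z) = -z)
    (μp μu : Measure X)
    (hint1p : ∀ θ : E, Integrable (fun x => ℓ (inner ℝ θ (φ x) : ℝ)) μp)
    (hint2p : ∀ θ : E, Integrable (fun x => ℓ (-(inner ℝ θ (φ x) : ℝ))) μp)
    (hint2u : ∀ θ : E, Integrable (fun x => ℓ (-(inner ℝ θ (φ x) : ℝ))) μu)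
    (π α : ℝ) (hπ : π ∈ Set.Ioo (0:ℝ) 1) (hα1 : 0 < α) (hα2 : α ≤ 1 / 2) :
    ConvexOn ℝ Set.univ (fun θ : E =>
      π * (∫ x, ((1 - α) * ℓ (inner ℝ θ (φ x) : ℝ)
          - α * ℓ (-(inner ℝ θ (φ x) : ℝ))) ∂μp)
        + α * ∫ x, ℓ (-(inner ℝ θ (φ x) : ℝ)) ∂μu) := by
  have hpos : ConvexOn ℝ Set.univ (fun θ : E =>
      ∫ x, ((1 - α) * ℓ (inner ℝ θ (φ x)) - α * ℓ (-inner ℝ θ (φ x))) ∂μp) :=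
    convexOn_integral convex_univ
      (fun x => (convexOn_asymmetric_loss hℓconv hℓodd hα2).comp_inner_left (φ x))
      fun θ _ => ((hint1p θ).const_mul _).sub ((hint2p θ).const_mul _)
  have hunl : ConvexOn ℝ Set.univ (fun θ : E => ∫ x, ℓ (-inner ℝ θ (φ x)) ∂μu) := by
    refine convexOn_integral convex_univ (fun x => ?_) fun θ _ => hint2u θ
    simpa only [inner_neg_right] using hℓconv.comp_inner_left (-φ x)
  exact (hpos.smul hπ.1.le).add (hunl.smul hα1.le)

theorem stmt_7 {E : Type*} [NormedAddCommGroup E] [InnerProductSpace ℝ E]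
    {X : Type*} [MeasurableSpace X] (φ : X → E)
    (ℓ : ℝ → ℝ) (hℓconv : ConvexOn ℝ Set.univ ℓ)
    (hℓodd : ∀ z : ℝ, ℓ z - ℓ (-z) = -z)
    (μp μu : Measure X) [IsProbabilityMeasure μp] [IsFiniteMeasure μu]
    (hint1p : ∀ θ : E, Integrable (fun x => ℓ (inner ℝ θ (φ x) : ℝ)) μp)
    (hint1u : ∀ θ : E, Integrable (fun x => ℓ (inner ℝ θ (φ x) : ℝ)) μu)
    (hint2p : ∀ θ : E, Integrable (fun x => ℓ (-(inner ℝ θ (φ x) : ℝ))) μp)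
    (hint2u : ∀ θ : E, Integrable (fun x => ℓ (-(inner ℝ θ (φ x) : ℝ))) μu)
    (hint3p : ∀ θ : E, Integrable (fun x => (inner ℝ θ (φ x) : ℝ)) μp)
    (hint3u : ∀ θ : E, Integrable (fun x => (inner ℝ θ (φ x) : ℝ)) μu)
    (π α : ℝ) (hπ : π ∈ Set.Ioo (0:ℝ) 1) (hα1 : 0 < α) (hα2 : α ≤ 1 / 2) :
    ConvexOn ℝ Set.univ (fun θ : E =>
      π * (∫ x, ((1 - α) * ℓ (inner ℝ θ (φ x) : ℝ)
          - α * ℓ (-(inner ℝ θ (φ x) : ℝ))) ∂μp)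
        + α * ∫ x, ℓ (-(inner ℝ θ (φ x) : ℝ)) ∂μu) :=
  stmt_7_general φ ℓ hℓconv hℓodd μp μu hint1p hint2p hint2u π α hπ hα1 hα2
end
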